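/- Let c, d, e be contexts on B with |e| > 0, and let x, x' be nonempty primitive words over B. If the triple (c, d, e) is both x-commuting and x'-commuting, then x and x' are conjugate. -/

import Mathlib

/-- `wpow x n` is the word `x` repeated `n` times (`x^n`). -/
def wpow {B : Type*} (x : List B) : ℕ → List B
  | 0 => []
  | n + 1 => x ++ wpow x n

/-- Length of a longest common factor (infix) of `u` and `v`. -/
noncomputable def lcfLen {B : Type*} (u v : List B) : ℕ :=
  sSup {n | ∃ w : List B, w.length = n ∧ w <:+: u ∧ w <:+: v}

/-- The factor distance `dist_f(u,v) = |u| + |v| - 2·|lcf(u,v)|`. -/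
noncomputable def distf {B : Type*} (u v : List B) : ℕ :=
  u.length + v.length - 2 * lcfLen u v

/-- A context is a pair of words; `capp c w = c.1 ++ w ++ c.2` is `c[w]`. -/
def capp {B : Type*} (c : List B × List B) (w : List B) : List B :=
  c.1 ++ w ++ c.2

/-- The length `|c|` of a context. -/
def clen {B : Type*} (c : List B × List B) : ℕ :=
  c.1.length + c.2.length

/-- Product of contexts: `(c·d)[w] = c[d[w]]`. -/
def cmul {B : Type*} (c d : List B × List B) : List B × List B :=
  (c.1 ++ d.1, d.2 ++ c.2)

/-- Power of a context: `c^n[w] = l^n ++ w ++ r^n`. -/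
def cpow {B : Type*} (c : List B × List B) (n : ℕ) : List B × List B :=
  (wpow c.1 n, wpow c.2 n)

/-- A nonempty word `x` is primitive if `x = y^p` with `p ≥ 1` implies `p = 1`. -/
def Primitive {B : Type*} (x : List B) : Prop :=
  x ≠ [] ∧ ∀ (y : List B) (p : ℕ), 1 ≤ p → x = wpow y p → p = 1

/-- Words `x` and `y` are conjugate. -/
def Conj {B : Type*} (x y : List B) : Prop :=
  ∃ t1 t2 : List B, x = t1 ++ t2 ∧ y = t2 ++ t1

/-- The triple of contexts `(c, d, e)` is `x`-commuting: there is a context `f`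
such that for every `i ≥ 1` there is `k` with `(e^i·d·c)[ε] = f[x^k]`. -/
def XCommuting {B : Type*} (c d e : List B × List B) (x : List B) : Prop :=
  ∃ f : List B × List B, ∀ i : ℕ, 1 ≤ i → ∃ k : ℕ,
    capp (cmul (cpow e i) (cmul d c)) [] = capp f (wpow x k)

/-!
Let `cyc x : ℤ → Option B` be the bi-infinite word `⋯ x x x ⋯`. For `i` large, the word
`(e^i·d·c)[ε]` is both `f[x^k]` and `f'[x'^k']`, so `cyc x'` and a shift of `cyc x` agree on a
window of length `|x|·|x'|`; this is a common period of both, so they agree everywhere. Then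
`cyc x` has the periods `|x|` and `|x'|`, hence by Bézout the period `gcd(|x|, |x'|)`, and
primitivity forces `|x| = gcd(|x|, |x'|) = |x'|`. Finally a length-`|x|` factor of a shift of
`cyc x` is a rotation of `x`.
-/

open Function Set

section

variable {B : Type*}

lemma length_wpow (x : List B) (k : ℕ) : (wpow x k).length = k * x.length := by
  induction k with
  | zero => simp [wpow]
  | succ k ih => simp only [wpow, List.length_append, ih]; ring

lemma length_capp_nil_cmul_cpow (e g : List B × List B) (i : ℕ) :
    (capp (cmul (cpow e i) g) []).length = i * clen e + clen g := by
  simp only [capp, cmul, cpow, clen, List.length_append, List.length_nil, length_wpow]; ring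

/-- `cyc x` is the bi-infinite word `⋯ x x x ⋯` with a copy of `x` starting at position `0`
(constantly `none` when `x = []`). -/
def cyc (x : List B) (j : ℤ) : Option B := x[(j % x.length).toNat]?

lemma cyc_periodic (x : List B) : Periodic (cyc x) x.length := by
  intro j
  simp only [cyc, Int.add_emod_right]

lemma cyc_natCast (x : List B) (j : ℕ) : cyc x j = x[j % x.length]? := by
  simp only [cyc, ← Int.natCast_mod, Int.toNat_natCast]

lemma cyc_natCast_of_lt {x : List B} {j : ℕ} (hj : j < x.length) : cyc x j = x[j]? := by
  rw [cyc_natCast, Nat.mod_eq_of_lt hj]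

lemma getElem?_wpow (x : List B) {k j : ℕ} (hj : j < k * x.length) :
    (wpow x k)[j]? = cyc x j := by
  induction k generalizing j with
  | zero => simp at hj
  | succ k ih =>
    rw [wpow]
    rcases lt_or_ge j x.length with h | h
    · rw [List.getElem?_append_left h, cyc_natCast_of_lt h]
    · rw [List.getElem?_append_right h, ih (by rw [Nat.succ_mul] at hj; omega),
        Nat.cast_sub h, (cyc_periodic x).sub_eq]

lemma getElem?_capp_wpow (f : List B × List B) (x : List B) (k : ℕ) {j : ℕ}
    (h₁ : f.1.length ≤ j) (h₂ : j + f.2.length < (capp f (wpow x k)).length) :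
    (capp f (wpow x k))[j]? = cyc x (j - f.1.length) := by
  simp only [capp, List.length_append, length_wpow] at h₂
  rw [capp, List.append_assoc, List.getElem?_append_right h₁,
    List.getElem?_append_left (by rw [length_wpow]; omega), getElem?_wpow x (by omega),
    Nat.cast_sub h₁]

lemma Function.Periodic.eq_of_eqOn_Ico {α : Type*} {F G : ℤ → α} {c : ℤ}
    (hF : Periodic F c) (hG : Periodic G c) (hc : 0 < c) {s : ℤ}
    (h : EqOn F G (Ico s (s + c))) : F = G := by
  funext j
  have hj : j - ((j - s) / c) • c = s + (j - s) % c := by rw [Int.emod_def, smul_eq_mul]; ring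
  rw [← hF.sub_zsmul_eq ((j - s) / c), ← hG.sub_zsmul_eq ((j - s) / c), hj]
  exact h ⟨by linarith [Int.emod_nonneg (j - s) hc.ne'],
    by linarith [Int.emod_lt_of_pos (j - s) hc]⟩

lemma Function.Periodic.gcd {α : Type*} {F : ℤ → α} {m n : ℕ}
    (hm : Periodic F m) (hn : Periodic F n) : Periodic F (m.gcd n) := by
  rw [Nat.gcd_eq_gcd_ab, mul_comm, mul_comm (n : ℤ)]
  exact (hm.int_mul _).add_period (hn.int_mul _)

lemma cyc_take_eq {x : List B} {g : ℕ} (hg : 0 < g) (hgx : g ≤ x.length)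
    (hper : Periodic (cyc x) g) : cyc (x.take g) = cyc x := by
  have hlen : (x.take g).length = g := List.length_take_of_le hgx
  have hper' : Periodic (cyc (x.take g)) g := by
    simpa only [hlen] using cyc_periodic (x.take g)
  refine hper'.eq_of_eqOn_Ico hper (by exact_mod_cast hg) (s := 0) ?_
  intro j ⟨hj₀, hj⟩
  lift j to ℕ using hj₀
  rw [zero_add, Nat.cast_lt] at hj
  rw [cyc_natCast_of_lt (by rwa [hlen]), cyc_natCast_of_lt (by omega), List.getElem?_take_of_lt hj]

lemma eq_wpow_take_of_periodic {x : List B} {g : ℕ} (hg : 0 < g) (hgx : g ∣ x.length)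
    (hper : Periodic (cyc x) g) : x = wpow (x.take g) (x.length / g) := by
  rcases Nat.eq_zero_or_pos x.length with h0 | hpos
  · simp [List.eq_nil_of_length_eq_zero h0, wpow]
  have hle : g ≤ x.length := Nat.le_of_dvd hpos hgx
  have hlen : (wpow (x.take g) (x.length / g)).length = x.length := by
    rw [length_wpow, List.length_take_of_le hle, Nat.div_mul_cancel hgx]
  apply List.ext_getElem?
  intro j
  rcases lt_or_ge j x.length with hj | hj
  · rw [getElem?_wpow _ (by rwa [← length_wpow, hlen]), cyc_take_eq hg hle hper,
      cyc_natCast_of_lt hj]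
  · rw [List.getElem?_eq_none hj, List.getElem?_eq_none (by rwa [hlen])]

lemma Primitive.eq_length_of_periodic {x : List B} (hx : Primitive x) {g : ℕ} (hg : 0 < g)
    (hgx : g ∣ x.length) (hper : Periodic (cyc x) g) : g = x.length := by
  have hle : g ≤ x.length := Nat.le_of_dvd (List.length_pos_iff.2 hx.1) hgx
  exact Nat.eq_of_dvd_of_div_eq_one hgx <|
    hx.2 _ _ (Nat.div_pos hle hg) (eq_wpow_take_of_periodic hg hgx hper)

lemma conj_rotate (x : List B) (m : ℕ) : Conj x (x.rotate m) :=
  ⟨x.take (m % x.length), x.drop (m % x.length), (List.take_append_drop _ _).symm,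
    List.rotate_eq_drop_append_take_mod⟩

lemma rotate_eq_of_cyc_eq_shift {x x' : List B} (hlen : x.length = x'.length) {r : ℤ}
    (h : ∀ t, cyc x' t = cyc x (t + r)) : x.rotate (r % x.length).toNat = x' := by
  apply List.ext_getElem?
  intro j
  rcases lt_or_ge j x.length with hj | hj
  · have hr : ((r % x.length).toNat : ℤ) = r - (r / x.length) • (x.length : ℤ) := by
      rw [Int.toNat_of_nonneg (Int.emod_nonneg _ (by omega)), Int.emod_def, smul_eq_mul,
        mul_comm]
    rw [List.getElem?_rotate hj, ← cyc_natCast, ← cyc_natCast_of_lt (by rwa [← hlen]), h,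
      Nat.cast_add, hr, ← add_sub_assoc, (cyc_periodic x).sub_zsmul_eq]
  · rw [List.getElem?_eq_none (by rwa [List.length_rotate]),
      List.getElem?_eq_none (by rwa [← hlen])]

lemma Primitive.conj_of_cyc_eq_shift {x x' : List B} (hx : Primitive x) (hx' : Primitive x')
    {r : ℤ} (h : ∀ t, cyc x' t = cyc x (t + r)) : Conj x x' := by
  have hper : Periodic (cyc x) x'.length := by
    have : cyc x = fun t => cyc x' (t - r) := funext fun t => by rw [h, sub_add_cancel]
    exact this ▸ (cyc_periodic x').sub_const r
  have hper' : Periodic (cyc x') x.length := fun t => by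
    rw [h, h, add_right_comm]; exact cyc_periodic x _
  have hg : 0 < x.length.gcd x'.length := Nat.gcd_pos_of_pos_left _ (List.length_pos_iff.2 hx.1)
  have h₁ := hx.eq_length_of_periodic hg (Nat.gcd_dvd_left _ _) ((cyc_periodic x).gcd hper)
  have h₂ := hx'.eq_length_of_periodic hg (Nat.gcd_dvd_right _ _) (hper'.gcd (cyc_periodic x'))
  exact rotate_eq_of_cyc_eq_shift (h₁.symm.trans h₂) h ▸ conj_rotate x _

lemma cyc_eq_shift_of_capp_wpow_eq {f f' : List B × List B} {x x' : List B} {k k' : ℕ}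
    (hx : x ≠ []) (hx' : x' ≠ []) (hw : capp f (wpow x k) = capp f' (wpow x' k'))
    (hlong : clen f + clen f' + x.length * x'.length ≤ (capp f (wpow x k)).length) (t : ℤ) :
    cyc x' t = cyc x (t + (f'.1.length - f.1.length)) := by
  set P := x.length * x'.length with hP
  have hP₀ : 0 < P := Nat.mul_pos (List.length_pos_iff.2 hx) (List.length_pos_iff.2 hx')
  have hF : Periodic (cyc x') P := by
    simpa only [hP, Nat.cast_mul] using (cyc_periodic x').nat_mul x.length
  have hG : Periodic (fun t => cyc x (t + (f'.1.length - f.1.length))) P := by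
    simpa only [hP, Nat.cast_mul, mul_comm] using
      ((cyc_periodic x).nat_mul x'.length).add_const _
  refine congrFun (hF.eq_of_eqOn_Ico hG (by exact_mod_cast hP₀) (s := f.1.length) ?_) t
  rintro u ⟨hu₁, hu₂⟩
  obtain ⟨j, rfl⟩ : ∃ j : ℕ, u = j - f'.1.length := ⟨(u + f'.1.length).toNat, by omega⟩
  unfold clen at hlong
  have hj : j + f.2.length < (capp f (wpow x k)).length := by omega
  have hj' : j + f'.2.length < (capp f' (wpow x' k')).length := by rw [← hw]; omega
  have hcyc := getElem?_capp_wpow f x k (by omega) hj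
  rw [hw, getElem?_capp_wpow f' x' k' (by omega) hj'] at hcyc
  rw [hcyc]; simp only [sub_add_sub_cancel]

end

theorem conjugate_of_com_com {B : Type*} (c d e : List B × List B)
    (he : 0 < clen e) (x x' : List B)
    (hx : Primitive x) (hx' : Primitive x')
    (hcom : XCommuting c d e x) (hcom' : XCommuting c d e x') :
    Conj x x' := by
  obtain ⟨f, hf⟩ := hcom
  obtain ⟨f', hf'⟩ := hcom'
  set i := clen f + clen f' + x.length * x'.length + 1
  obtain ⟨k, hk⟩ := hf i (by omega)
  obtain ⟨k', hk'⟩ := hf' i (by omega)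
  have hlong : i ≤ (capp f (wpow x k)).length := by
    rw [← hk, length_capp_nil_cmul_cpow]
    exact (Nat.le_mul_of_pos_right i he).trans (Nat.le_add_right _ _)
  exact hx.conj_of_cyc_eq_shift hx' <|
    cyc_eq_shift_of_capp_wpow_eq hx.1 hx'.1 (hk.symm.trans hk') (by omega)
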